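/- Let n, N be positive integers and θ ∈ (0,1) with n²/(N+1)² ≤ θ. Then the product ∏_{k=N+1}^∞ (1 − n²/k²) converges (is multipliable), each factor lies in (0,1), and |ln ∏_{k=N+1}^∞ (1 − n²/k²)| ≤ n² · (|ln(1−θ)|/θ) · (π²/6 − ∑_{k=1}^N 1/k²). -/

import Mathlib

/-!
Concavity of `log` gives `|log (1 - x)| ≤ (|log (1 - θ)| / θ) x` for `0 ≤ x ≤ θ < 1`. Since the
logarithm of the product is the sum of the logarithms of its factors, it is bounded by that
constant times `∑_{k > N} n² / k²`, which is `n²` times the tail of the Basel series `π² / 6`.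
-/

open Real Finset

theorem Real.mul_log_one_sub_le_log_one_sub {x θ : ℝ} (hx : 0 ≤ x) (hxθ : x ≤ θ) (hθ : θ < 1) :
    x / θ * log (1 - θ) ≤ log (1 - x) := by
  rcases hx.eq_or_lt with rfl | hx
  · simp
  have hθ0 : 0 < θ := hx.trans_le hxθ
  have hw : x / θ ≤ 1 := (div_le_one hθ0).2 hxθ
  have hchord := strictConcaveOn_log_Ioi.concaveOn.2 (Set.mem_Ioi.2 one_pos)
    (Set.mem_Ioi.2 (sub_pos.2 hθ)) (sub_nonneg.2 hw) (by positivity) (sub_add_cancel 1 (x / θ))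
  have hconv : (1 - x / θ) • (1 : ℝ) + (x / θ) • (1 - θ) = 1 - x := by
    simp only [smul_eq_mul]; field_simp; ring
  rw [hconv] at hchord
  simpa using hchord

theorem Real.abs_log_one_sub_le {x θ : ℝ} (hx : 0 ≤ x) (hxθ : x ≤ θ) (hθ : θ < 1) :
    |log (1 - x)| ≤ |log (1 - θ)| / θ * x := by
  have hθ0 : 0 ≤ θ := hx.trans hxθ
  have hchord := mul_log_one_sub_le_log_one_sub hx hxθ hθ
  rw [abs_of_nonpos (log_nonpos (by linarith) (by linarith)),
    abs_of_nonpos (log_nonpos (by linarith) (by linarith))]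
  calc -log (1 - x) ≤ -(x / θ * log (1 - θ)) := neg_le_neg hchord
    _ = -log (1 - θ) / θ * x := by ring

theorem Real.hasSum_one_div_nat_add_succ_sq (N : ℕ) :
    HasSum (fun k : ℕ => 1 / ((k : ℝ) + N + 1) ^ 2)
      (π ^ 2 / 6 - ∑ k ∈ Icc 1 N, 1 / (k : ℝ) ^ 2) := by
  have h := (hasSum_nat_add_iff' (N + 1)).2 hasSum_zeta_two
  rw [range_eq_Ico, sum_eq_sum_Ico_succ_bot N.succ_pos, zero_add, Nat.succ_eq_add_one,
    Ico_add_one_right_eq_Icc] at h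
  simpa [add_assoc] using h

theorem Real.log_tprod_eq_tsum_log {ι : Type*} {f : ι → ℝ} (hfn : ∀ i, 0 < f i)
    (hf : Summable fun i ↦ log (f i)) : log (∏' i, f i) = ∑' i, log (f i) := by
  rw [← rexp_tsum_eq_tprod hfn hf, log_exp]

section OneSub

variable {ι : Type*} {a : ι → ℝ} {θ : ℝ}

theorem Real.summable_abs_log_one_sub (hθ : θ < 1) (ha0 : ∀ i, 0 ≤ a i) (haθ : ∀ i, a i ≤ θ)
    (ha : Summable a) : Summable fun i ↦ |log (1 - a i)| :=
  .of_nonneg_of_le (fun _ ↦ abs_nonneg _) (fun i ↦ abs_log_one_sub_le (ha0 i) (haθ i) hθ)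
    (ha.mul_left _)

theorem Real.multipliable_one_sub (hθ : θ < 1) (ha0 : ∀ i, 0 ≤ a i) (haθ : ∀ i, a i ≤ θ)
    (ha : Summable a) : Multipliable fun i ↦ 1 - a i :=
  multipliable_of_summable_log (fun i ↦ by linarith [haθ i])
    (summable_abs_log_one_sub hθ ha0 haθ ha).of_abs

theorem Real.abs_log_tprod_one_sub_le (hθ : θ < 1) (ha0 : ∀ i, 0 ≤ a i) (haθ : ∀ i, a i ≤ θ)
    (ha : Summable a) : |log (∏' i, (1 - a i))| ≤ |log (1 - θ)| / θ * ∑' i, a i := by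
  have habs := summable_abs_log_one_sub hθ ha0 haθ ha
  calc |log (∏' i, (1 - a i))| = |∑' i, log (1 - a i)| := by
        rw [log_tprod_eq_tsum_log (fun i ↦ by linarith [haθ i]) habs.of_abs]
    _ ≤ ∑' i, |log (1 - a i)| := 
        norm_tsum_le_tsum_norm (f := fun i ↦ log (1 - a i)) habs
    _ ≤ ∑' i, |log (1 - θ)| / θ * a i :=
        habs.tsum_le_tsum (fun i ↦ abs_log_one_sub_le (ha0 i) (haθ i) hθ) (ha.mul_left _)
    _ = |log (1 - θ)| / θ * ∑' i, a i := tsum_mul_left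

end OneSub

theorem stmt_2_general (n N : ℕ) (hn : 0 < n) (θ : ℝ) (hθ : θ ∈ Set.Ioo (0:ℝ) 1)
    (h : (n : ℝ) ^ 2 / ((N : ℝ) + 1) ^ 2 ≤ θ) :
    Multipliable (fun k : ℕ => 1 - (n : ℝ) ^ 2 / ((k : ℝ) + N + 1) ^ 2) ∧
    (∀ k : ℕ, (1 - (n : ℝ) ^ 2 / ((k : ℝ) + N + 1) ^ 2) ∈ Set.Ioo (0:ℝ) 1) ∧
    |Real.log (∏' k : ℕ, (1 - (n : ℝ) ^ 2 / ((k : ℝ) + N + 1) ^ 2))| ≤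
      (n : ℝ) ^ 2 * (|Real.log (1 - θ)| / θ) *
        (Real.pi ^ 2 / 6 - ∑ k ∈ Finset.Icc 1 N, 1 / (k : ℝ) ^ 2) := by
  set a : ℕ → ℝ := fun k ↦ (n : ℝ) ^ 2 / ((k : ℝ) + N + 1) ^ 2
  have ha_pos (k : ℕ) : 0 < a k := by positivity
  have haθ (k : ℕ) : a k ≤ θ :=
    (div_le_div_of_nonneg_left (by positivity) (by positivity) (by gcongr; simp)).trans h
  have ha : HasSum a ((n : ℝ) ^ 2 * (π ^ 2 / 6 - ∑ k ∈ Icc 1 N, 1 / (k : ℝ) ^ 2)) := by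
    simpa [a, div_eq_mul_one_div ((n : ℝ) ^ 2)] using
      (hasSum_one_div_nat_add_succ_sq N).mul_left ((n : ℝ) ^ 2)
  refine ⟨multipliable_one_sub hθ.2 (fun k ↦ (ha_pos k).le) haθ ha.summable,
    fun k ↦ ⟨by linarith [haθ k, hθ.2], by linarith [ha_pos k]⟩, ?_⟩
  calc |log (∏' k, (1 - a k))| ≤ |log (1 - θ)| / θ * ∑' k, a k :=
        abs_log_tprod_one_sub_le hθ.2 (fun k ↦ (ha_pos k).le) haθ ha.summable
    _ = _ := by rw [ha.tsum_eq]; ring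

theorem stmt_2 (n N : ℕ) (hn : 0 < n) (hN : 0 < N) (θ : ℝ) (hθ : θ ∈ Set.Ioo (0:ℝ) 1)
    (h : (n : ℝ) ^ 2 / ((N : ℝ) + 1) ^ 2 ≤ θ) :
    Multipliable (fun k : ℕ => 1 - (n : ℝ) ^ 2 / ((k : ℝ) + N + 1) ^ 2) ∧
    (∀ k : ℕ, (1 - (n : ℝ) ^ 2 / ((k : ℝ) + N + 1) ^ 2) ∈ Set.Ioo (0:ℝ) 1) ∧
    |Real.log (∏' k : ℕ, (1 - (n : ℝ) ^ 2 / ((k : ℝ) + N + 1) ^ 2))| ≤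
      (n : ℝ) ^ 2 * (|Real.log (1 - θ)| / θ) *
        (Real.pi ^ 2 / 6 - ∑ k ∈ Finset.Icc 1 N, 1 / (k : ℝ) ^ 2) :=
  stmt_2_general n N hn θ hθ h
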